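/- arXiv:2006.03882 — 6 statements merged into one kernel-verified Lean document; each statement's English description precedes it below -/
import Mathlib

section
/- For each integer N ≥ 2, the equation x^2 - 2x - 1 = -2x^{1-N} has a real root y_N in the open interval (1, 1+√2), and moreover for all real x ≥ 1+√2 we have x^2 - 2x - 1 + 2x^{1-N} > 0 (so all roots in [1,∞) lie below 1+√2). -/
theorem root_exists_and_bound (N : ℕ) (hN : 2 ≤ N) :
    (∃ y : ℝ, 1 < y ∧ y < 1 + Real.sqrt 2 ∧
        y ^ 2 - 2 * y - 1 + 2 * y ^ (1 - (N : ℤ)) = 0) ∧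
    ∀ x : ℝ, 1 + Real.sqrt 2 ≤ x →
        0 < x ^ 2 - 2 * x - 1 + 2 * x ^ (1 - (N : ℤ)) := by
  have hs2 : Real.sqrt 2 ^ 2 = 2 := Real.sq_sqrt (by norm_num)
  have h2 : (1:ℝ) < Real.sqrt 2 := by
    nlinarith [Real.sqrt_nonneg 2]
  set b : ℝ := 1 + Real.sqrt 2 with hb
  have hb0 : (0:ℝ) < b := by positivity
  have hexp : (1 - (N:ℤ)) = -((N-1 : ℕ) : ℤ) := by
    push_cast [Nat.cast_sub (by omega : 1 ≤ N)]; ring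
  have hzpow : ∀ x : ℝ, x ^ (1 - (N:ℤ)) = (x ^ (N-1))⁻¹ := by
    intro x; rw [hexp, zpow_neg, zpow_natCast]
  set g : ℝ → ℝ := fun x => x ^ 2 - 2 * x - 1 + 2 * x ^ (1 - (N:ℤ)) with hg
  constructor
  · have hab : (3/2 : ℝ) ≤ b := by rw [hb]; linarith
    have hcont : ContinuousOn g (Set.Icc (3/2) b) := by
      apply ContinuousOn.add
      · fun_prop
      · apply ContinuousOn.mul continuousOn_const
        intro x hx
        have hx0 : x ≠ 0 := by
          have := hx.1; intro h; rw [h] at this; norm_num at this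
        exact (continuousAt_zpow₀ x _ (Or.inl hx0)).continuousWithinAt
    have hga : g (3/2) < 0 := by
      have hk : (1:ℕ) ≤ N - 1 := by omega
      have h1 : (3/2 : ℝ) ≤ (3/2 : ℝ) ^ (N-1) := by
        calc (3/2:ℝ) = (3/2:ℝ)^1 := by norm_num
        _ ≤ (3/2:ℝ)^(N-1) := pow_le_pow_right₀ (by norm_num) hk
      have h2' : ((3/2:ℝ) ^ (N-1))⁻¹ ≤ 2/3 := by
        rw [inv_le_comm₀ (by positivity) (by norm_num)]
        linarith
      simp only [hg, hzpow]
      nlinarith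
    have hgb : 0 < g b := by
      have hbz : (0:ℝ) < b ^ (1 - (N:ℤ)) := zpow_pos hb0 _
      have : b ^ 2 - 2 * b - 1 = 0 := by rw [hb]; nlinarith
      simp only [hg]; nlinarith
    have := intermediate_value_Ioo hab hcont (a := (3/2:ℝ)) (b := b)
    have h0 : (0:ℝ) ∈ Set.Ioo (g (3/2)) (g b) := ⟨hga, hgb⟩
    obtain ⟨y, hy, hgy⟩ := this h0
    exact ⟨y, by linarith [hy.1], hy.2, hgy⟩
  · intro x hx
    have hx0 : (0:ℝ) < x := lt_of_lt_of_le hb0 hx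
    have hxz : (0:ℝ) < x ^ (1 - (N:ℤ)) := zpow_pos hx0 _
    have : 0 ≤ x ^ 2 - 2 * x - 1 := by nlinarith
    nlinarith
end

section
/- Let y_N denote the largest real root of x^2 - 2x - 1 = -2x^{1-N} in (1, ∞). Then y_N → 1+√2 as N → ∞. -/
open Filter Real Set

theorem largest_root_tendsto (y : ℕ → ℝ)
    (hy : ∀ N : ℕ, 2 ≤ N → IsGreatest
      {x : ℝ | 1 < x ∧ x ^ 2 - 2 * x - 1 + 2 * x ^ (1 - (N : ℤ)) = 0} (y N)) :
    Filter.Tendsto y Filter.atTop (nhds (1 + Real.sqrt 2)) := by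
  have hsq : Real.sqrt 2 ^ 2 = 2 := Real.sq_sqrt (by norm_num)
  have h2 : (0:ℝ) < Real.sqrt 2 := Real.sqrt_pos.mpr (by norm_num)
  have h1 : (1:ℝ) < Real.sqrt 2 := by nlinarith
  set r := 1 + Real.sqrt 2 with hr
  rw [Metric.tendsto_atTop]
  intro ε hε
  set ε' := min ε 1 with hε'def
  have hε'0 : 0 < ε' := lt_min hε one_pos
  have hε'1 : ε' ≤ 1 := min_le_right _ _
  have hε'ε : ε' ≤ ε := min_le_left _ _
  set x₀ := r - ε' with hx₀def
  have hx₀1 : 1 < x₀ := by simp only [hx₀def, hr]; linarith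
  have hx₀0 : x₀ ≠ 0 := by linarith
  set δ := 2 * Real.sqrt 2 * ε' - ε' ^ 2 with hδdef
  have hδ0 : 0 < δ := by nlinarith
  have hinv : (0:ℝ) ≤ x₀⁻¹ := by positivity
  have hinv1 : x₀⁻¹ < 1 := by rw [inv_lt_one_iff₀]; right; exact hx₀1
  have htend : Tendsto (fun N : ℕ => x₀ * x₀⁻¹ ^ N) atTop (nhds 0) := by
    have := (tendsto_pow_atTop_nhds_zero_of_lt_one hinv hinv1).const_mul x₀
    simpa using this
  have hev : ∀ᶠ N : ℕ in atTop, x₀ * x₀⁻¹ ^ N < δ / 2 :=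
    htend.eventually_lt_const (by linarith)
  obtain ⟨M, hM⟩ := eventually_atTop.mp hev
  refine ⟨max 2 M, fun N hN => ?_⟩
  have hN2 : 2 ≤ N := le_trans (le_max_left _ _) hN
  have hNM : M ≤ N := le_trans (le_max_right _ _) hN
  obtain ⟨⟨hy1, hyeq⟩, hub⟩ := hy N hN2
  -- upper bound: y N < r
  have hyp : (0:ℝ) < y N ^ (1 - (N:ℤ)) := zpow_pos (by linarith) _
  have hupper : y N < r := by
    have hq : y N ^ 2 - 2 * y N - 1 < 0 := by linarith
    nlinarith
  -- lower bound via IVT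
  have hx₀r : x₀ ≤ r := by simp only [hx₀def]; linarith
  have hzpow : x₀ ^ (1 - (N:ℤ)) = x₀ * x₀⁻¹ ^ N := by
    rw [zpow_sub₀ hx₀0, zpow_one, zpow_natCast, inv_pow, div_eq_mul_inv]
  have hc : ContinuousOn (fun x : ℝ => x ^ 2 - 2 * x - 1 + 2 * x ^ (1 - (N:ℤ)))
      (Icc x₀ r) := by
    apply ContinuousOn.add
    · fun_prop
    · exact continuousOn_const.mul (continuousOn_id.zpow₀ _
        (fun x hx => Or.inl (by have := hx.1; intro h; simp only [id_eq] at h; rw [h] at this; linarith)))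
  have hfx₀ : x₀ ^ 2 - 2 * x₀ - 1 + 2 * x₀ ^ (1 - (N:ℤ)) < 0 := by
    rw [hzpow]
    have := hM N hNM
    have hx₀q : x₀ ^ 2 - 2 * x₀ - 1 = -δ := by
      simp only [hx₀def, hδdef, hr]; linear_combination hsq
    nlinarith
  have hfr : 0 ≤ r ^ 2 - 2 * r - 1 + 2 * r ^ (1 - (N:ℤ)) := by
    have hrq : r ^ 2 - 2 * r - 1 = 0 := by simp only [hr]; linear_combination hsq
    have : (0:ℝ) < r ^ (1 - (N:ℤ)) := zpow_pos (by linarith) _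
    linarith
  obtain ⟨c, hcmem, hfc⟩ := intermediate_value_Icc hx₀r hc ⟨le_of_lt hfx₀, hfr⟩
  have hfc : c ^ 2 - 2 * c - 1 + 2 * c ^ (1 - (N:ℤ)) = 0 := hfc
  have hc1 : 1 < c := lt_of_lt_of_le hx₀1 hcmem.1
  have hcy : c ≤ y N := hub ⟨hc1, hfc⟩
  have hcx₀ : c ≠ x₀ := by
    intro h; rw [h] at hfc; linarith
  have hlower : r - ε' < y N := by
    have : x₀ < c := lt_of_le_of_ne hcmem.1 (Ne.symm hcx₀)
    simp only [hx₀def] at this ⊢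
    linarith
  rw [Real.dist_eq, abs_sub_lt_iff]
  constructor <;> linarith
end

section
/- The sequence (y_N) of largest roots of x^2-2x-1 = -2x^{1-N} on (1,∞) is strictly increasing in N (for N ≥ 2). -/
theorem largest_root_strictMono (y : ℕ → ℝ)
    (hy : ∀ N : ℕ, 2 ≤ N → IsGreatest
      {x : ℝ | 1 < x ∧ x ^ 2 - 2 * x - 1 + 2 * x ^ (1 - (N : ℤ)) = 0} (y N)) :
    ∀ M N : ℕ, 2 ≤ M → M < N → y M < y N := by
  intro M N hM hMN
  obtain ⟨⟨hyM1, hyMeq⟩, _⟩ := hy M hM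
  obtain ⟨_, hNub⟩ := hy N (by omega)
  set g : ℝ → ℝ := fun x => x ^ 2 - 2 * x - 1 + 2 * x ^ (1 - (N : ℤ)) with hg
  have hyM0 : (0:ℝ) < y M := by linarith
  -- g (y M) < 0
  have hzlt : (y M) ^ (1 - (N : ℤ)) < (y M) ^ (1 - (M : ℤ)) := by
    apply zpow_lt_zpow_right₀ hyM1
    omega
  have hgM : g (y M) < 0 := by
    simp only [hg]
    nlinarith [hzlt, hyMeq]
  -- y M < 3
  have hposM : (0:ℝ) < (y M) ^ (1 - (M : ℤ)) := zpow_pos hyM0 _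
  have hyM3 : y M < 3 := by nlinarith
  -- g 3 > 0
  have hg3 : 0 < g 3 := by
    have : (0:ℝ) < (3:ℝ) ^ (1 - (N : ℤ)) := zpow_pos (by norm_num) _
    simp only [hg]
    nlinarith
  -- continuity
  have hcont : ContinuousOn g (Set.Icc (y M) 3) := by
    apply ContinuousOn.add
    · fun_prop
    · apply ContinuousOn.mul continuousOn_const
      intro x hx
      have hx0 : x ≠ 0 := by
        have := hx.1; intro h; rw [h] at this; linarith
      exact (continuousAt_zpow₀ x _ (Or.inl hx0)).continuousWithinAt
  have hmem : (0:ℝ) ∈ Set.Icc (g (y M)) (g 3) := ⟨le_of_lt hgM, le_of_lt hg3⟩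
  obtain ⟨c, hc, hc0⟩ := intermediate_value_Icc (le_of_lt hyM3) hcont hmem
  have hc1 : 1 < c := lt_of_lt_of_le hyM1 hc.1
  have hcy : y M < c := by
    rcases lt_or_eq_of_le hc.1 with h | h
    · exact h
    · exfalso; rw [← h] at hc0; linarith
  have := hNub ⟨hc1, hc0⟩
  linarith
end

section
/- Let A be a point on the open right unit semicircle C = {(cos θ, sin θ) : -π/2 < θ < π/2}, and let L₁, L₂ be two rays from A making equal angles with the inward normal to C at A (billiard reflection), each making an angle less than π/4 with the horizontal direction, and each intersecting C only at A. Then the polar angle θ of A satisfies |θ| < π/4. -/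
open Real

/-- A point of the open right unit semicircle, given by its polar angle. -/
noncomputable def semicirclePt (θ : ℝ) : ℝ × ℝ := (Real.cos θ, Real.sin θ)

/-!
Adding the incoming and the reflected direction cancels their tangential components:
`u₁ + u₂ = 2 ⟪u₁, n⟫ n` with `n = (cos θ, sin θ)` the normal at `A`. Both directions lie in the
open convex cone of vectors within `π/4` of `(-1, 0)`, hence so does their sum, and therefore
the line through the normal `n` meets that cone. That says `|sin θ| < cos θ`, i.e.
`|tan θ| < 1`.
-/

def leftCone : Set (ℝ × ℝ) := {v | |v.2| < -v.1}

lemma mem_leftCone_of_abs_lt_abs {v : ℝ × ℝ} (hv : v.1 < 0) (h : |v.2| < |v.1|) :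
    v ∈ leftCone :=
  show |v.2| < -v.1 from abs_of_neg hv ▸ h

lemma add_mem_leftCone {v w : ℝ × ℝ} (hv : v ∈ leftCone) (hw : w ∈ leftCone) :
    v + w ∈ leftCone :=
  calc |v.2 + w.2| ≤ |v.2| + |w.2| := abs_add_le _ _
    _ < -v.1 + -w.1 := add_lt_add hv hw
    _ = -(v + w).1 := by simp only [Prod.fst_add]; ring

lemma abs_lt_of_smul_mem_leftCone {r c s : ℝ} (hc : 0 < c) (h : r • (c, s) ∈ leftCone) :
    |s| < c := by
  simp only [leftCone, Set.mem_ofPred_eq, Prod.smul_mk, smul_eq_mul, abs_mul] at h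
  have hr : r < 0 := by nlinarith [mul_nonneg (abs_nonneg r) (abs_nonneg s)]
  rw [abs_of_neg hr] at h
  exact lt_of_mul_lt_mul_left (by linarith) (neg_nonneg.2 hr.le)

lemma abs_lt_pi_div_four_of_abs_sin_lt_cos {θ : ℝ} (h₁ : -(π / 2) < θ) (h₂ : θ < π / 2)
    (h : |sin θ| < cos θ) : |θ| < π / 4 := by
  have hc : 0 < cos θ := cos_pos_of_mem_Ioo ⟨h₁, h₂⟩
  have htan : |tan θ| < 1 := by
    rwa [tan_eq_sin_div_cos, abs_div, abs_of_pos hc, div_lt_one hc]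
  have hθ : θ ∈ Set.Ioo (-(π / 2)) (π / 2) := ⟨h₁, h₂⟩
  have hπ : π / 4 ∈ Set.Ioo (-(π / 2)) (π / 2) := ⟨by linarith [pi_pos], by linarith [pi_pos]⟩
  have hnegπ : -(π / 4) ∈ Set.Ioo (-(π / 2)) (π / 2) :=
    ⟨by linarith [pi_pos], by linarith [pi_pos]⟩
  rw [abs_lt] at htan ⊢
  constructor
  · refine (strictMonoOn_tan.lt_iff_lt hnegπ hθ).1 ?_
    rw [tan_neg, tan_pi_div_four]
    exact htan.1
  · refine (strictMonoOn_tan.lt_iff_lt hθ hπ).1 ?_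
    rw [tan_pi_div_four]
    exact htan.2

theorem reflection_angle_lt_pi_div_four_general (θ : ℝ)
    (hθ₁ : -(π / 2) < θ) (hθ₂ : θ < π / 2)
    (u₁ u₂ : ℝ × ℝ)
    -- L₂ is the billiard reflection of L₁: u₂ is the mirror image of u₁
    -- across the radius (normal) direction at A = (cos θ, sin θ)
    (hrefl : u₂ = (2 * (u₁.1 * Real.cos θ + u₁.2 * Real.sin θ)) •
        semicirclePt θ - u₁)
    -- both rays point into the region to the left of the semicircle
    (hin₁ : u₁.1 < 0) (hin₂ : u₂.1 < 0)
    -- each ray makes an angle less than π/4 with the horizontal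
    (hslope₁ : |u₁.2| < |u₁.1|) (hslope₂ : |u₂.2| < |u₂.1|) :
    |θ| < π / 4 := by
  have hsum : u₁ + u₂ ∈ leftCone :=
    add_mem_leftCone (mem_leftCone_of_abs_lt_abs hin₁ hslope₁)
      (mem_leftCone_of_abs_lt_abs hin₂ hslope₂)
  rw [hrefl, add_sub_cancel] at hsum
  exact abs_lt_pi_div_four_of_abs_sin_lt_cos hθ₁ hθ₂
    (abs_lt_of_smul_mem_leftCone (cos_pos_of_mem_Ioo ⟨hθ₁, hθ₂⟩) hsum)

theorem reflection_angle_lt_pi_div_four (θ : ℝ)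
    (hθ₁ : -(π / 2) < θ) (hθ₂ : θ < π / 2)
    (u₁ u₂ : ℝ × ℝ)
    -- L₂ is the billiard reflection of L₁: u₂ is the mirror image of u₁
    -- across the radius (normal) direction at A = (cos θ, sin θ)
    (hrefl : u₂ = (2 * (u₁.1 * Real.cos θ + u₁.2 * Real.sin θ)) •
        semicirclePt θ - u₁)
    (hu₁ : u₁ ≠ 0)
    -- both rays point into the region to the left of the semicircle
    (hin₁ : u₁.1 < 0) (hin₂ : u₂.1 < 0)
    -- each ray makes an angle less than π/4 with the horizontal
    (hslope₁ : |u₁.2| < |u₁.1|) (hslope₂ : |u₂.2| < |u₂.1|)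
    -- each ray intersects the semicircle only at A
    (honly₁ : ∀ t : ℝ, 0 < t → ∀ φ : ℝ, -(π / 2) < φ → φ < π / 2 →
        semicirclePt θ + t • u₁ ≠ semicirclePt φ)
    (honly₂ : ∀ t : ℝ, 0 < t → ∀ φ : ℝ, -(π / 2) < φ → φ < π / 2 →
        semicirclePt θ + t • u₂ ≠ semicirclePt φ) :
    |θ| < π / 4 :=
  reflection_angle_lt_pi_div_four_general θ hθ₁ hθ₂ u₁ u₂ hrefl hin₁ hin₂ hslope₁ hslope₂
end

section
/- In the setting of the previous reflection configuration, neither L₁ nor L₂ passes through an endpoint (0,1) or (0,-1) of the semicircle C. -/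
open Real

/-!
Suppose the ray from `A = (c, s)` in direction `u` reaches `(0, ε)` with `ε = ±1`, and put
`σ = ε s`. Up to a positive factor `u = (-c, ε - s)`, so the slope bound on `u` reads
`(1 - σ)² < 1 - σ²`, i.e. `0 < σ < 1`. The mirror image of `u` across the radius is then
`(c (2σ - 1), ε (2σ + 1)(σ - 1))`; pointing left forces `σ < 1/2`, and then it is steeper than
the diagonal since `((2σ + 1)(σ - 1))² - (1 - σ²)(2σ - 1)² = 2σ(1 - σ)(3 - 4σ²) > 0`.
Reflection is an involution, so the same argument applies to the second ray.
-/

/-- The mirror image of `u` across the line spanned by `n`, provided `n` is a unit vector. -/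
def reflectAcross (n u : ℝ × ℝ) : ℝ × ℝ := (2 * (u.1 * n.1 + u.2 * n.2)) • n - u

lemma reflectAcross_smul (n u : ℝ × ℝ) (t : ℝ) :
    reflectAcross n (t • u) = t • reflectAcross n u := by
  ext <;> simp only [reflectAcross, Prod.smul_fst, Prod.smul_snd, Prod.fst_sub, Prod.snd_sub,
    smul_eq_mul] <;> ring

lemma reflectAcross_reflectAcross {n : ℝ × ℝ} (hn : n.1 ^ 2 + n.2 ^ 2 = 1) (u : ℝ × ℝ) :
    reflectAcross n (reflectAcross n u) = u := by
  ext <;> simp only [reflectAcross, Prod.smul_fst, Prod.smul_snd, Prod.fst_sub, Prod.snd_sub,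
    smul_eq_mul]
  · linear_combination (4 * (u.1 * n.1 + u.2 * n.2) * n.1) * hn
  · linear_combination (4 * (u.1 * n.1 + u.2 * n.2) * n.2) * hn

lemma abs_snd_smul_lt_abs_fst_smul_iff {t : ℝ} (ht : 0 < t) (u : ℝ × ℝ) :
    |(t • u).2| < |(t • u).1| ↔ |u.2| < |u.1| := by
  simp only [Prod.smul_fst, Prod.smul_snd, smul_eq_mul, abs_mul, abs_of_pos ht,
    mul_lt_mul_iff_right₀ ht]

lemma mul_sq_lt_sq_of_pos_of_lt_half {σ : ℝ} (h₀ : 0 < σ) (h₁ : σ < 1 / 2) :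
    (1 - σ ^ 2) * (2 * σ - 1) ^ 2 < ((2 * σ + 1) * (σ - 1)) ^ 2 := by
  have key : ((2 * σ + 1) * (σ - 1)) ^ 2 - (1 - σ ^ 2) * (2 * σ - 1) ^ 2 =
      2 * σ * (1 - σ) * (3 - 4 * σ ^ 2) := by ring
  have : 0 < 2 * σ * (1 - σ) * (3 - 4 * σ ^ 2) := by
    have : 0 < 3 - 4 * σ ^ 2 := by nlinarith
    have : 0 < 1 - σ := by linarith
    positivity
  linarith

lemma reflectAcross_chord {n : ℝ × ℝ} (hn : n.1 ^ 2 + n.2 ^ 2 = 1) {ε : ℝ} (hε : ε ^ 2 = 1) :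
    reflectAcross n ((0, ε) - n) =
      (n.1 * (2 * (ε * n.2) - 1), ε * ((2 * (ε * n.2) + 1) * (ε * n.2 - 1))) := by
  ext <;> simp only [reflectAcross, Prod.smul_fst, Prod.smul_snd, Prod.fst_sub, Prod.snd_sub,
    smul_eq_mul]
  · linear_combination (-2 * n.1) * hn
  · linear_combination (-2 * n.2) * hn + (n.2 - 2 * ε * n.2 ^ 2) * hε

lemma not_abs_lt_of_reflectAcross_chord {n : ℝ × ℝ} (hn : n.1 ^ 2 + n.2 ^ 2 = 1)
    (hn₁ : 0 < n.1) {ε : ℝ} (hε : ε ^ 2 = 1)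
    (hw : |((0, ε) - n).2| < |((0, ε) - n).1|)
    (hv₁ : (reflectAcross n ((0, ε) - n)).1 < 0) :
    ¬ |(reflectAcross n ((0, ε) - n)).2| < |(reflectAcross n ((0, ε) - n)).1| := by
  rw [reflectAcross_chord hn hε] at hv₁ ⊢
  obtain ⟨c, s⟩ := n
  simp only [Prod.fst_sub, Prod.snd_sub, ← sq_lt_sq, not_lt] at hn hn₁ hw hv₁ ⊢
  set σ := ε * s
  have hc : c ^ 2 = 1 - σ ^ 2 := by linear_combination hn + s ^ 2 * hε
  have hσ₀ : 0 < σ := by nlinarith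
  have hσ₁ : σ < 1 / 2 := by nlinarith
  calc (c * (2 * σ - 1)) ^ 2 = (1 - σ ^ 2) * (2 * σ - 1) ^ 2 := by rw [mul_pow, hc]
    _ ≤ ((2 * σ + 1) * (σ - 1)) ^ 2 := (mul_sq_lt_sq_of_pos_of_lt_half hσ₀ hσ₁).le
    _ = (ε * ((2 * σ + 1) * (σ - 1))) ^ 2 := by rw [mul_pow ε, hε, one_mul]

lemma ray_ne_endpoint_of_reflectAcross {n u : ℝ × ℝ} (hn : n.1 ^ 2 + n.2 ^ 2 = 1)
    (hn₁ : 0 < n.1) (hu : |u.2| < |u.1|) (hv₁ : (reflectAcross n u).1 < 0)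
    (hv : |(reflectAcross n u).2| < |(reflectAcross n u).1|) {t : ℝ} (ht : 0 < t) {ε : ℝ}
    (hε : ε ^ 2 = 1) : n + t • u ≠ (0, ε) := by
  intro h
  have hw : t • u = (0, ε) - n := eq_sub_of_add_eq' h
  have key := not_abs_lt_of_reflectAcross_chord hn hn₁ hε
  rw [← hw, reflectAcross_smul] at key
  exact key ((abs_snd_smul_lt_abs_fst_smul_iff ht u).2 hu) (mul_neg_of_pos_of_neg ht hv₁)
    ((abs_snd_smul_lt_abs_fst_smul_iff ht _).2 hv)

theorem reflection_misses_endpoints_general (θ : ℝ)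
    (hθ₁ : -(π / 2) < θ) (hθ₂ : θ < π / 2)
    (u₁ u₂ : ℝ × ℝ)
    -- L₂ is the billiard reflection of L₁: u₂ is the mirror image of u₁
    -- across the radius (normal) direction at A = (cos θ, sin θ)
    (hrefl : u₂ = (2 * (u₁.1 * Real.cos θ + u₁.2 * Real.sin θ)) •
        semicirclePt θ - u₁)
    -- both rays point into the region to the left of the semicircle
    (hin₁ : u₁.1 < 0) (hin₂ : u₂.1 < 0)
    -- each ray makes an angle less than π/4 with the horizontal
    (hslope₁ : |u₁.2| < |u₁.1|) (hslope₂ : |u₂.2| < |u₂.1|) :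
    (∀ t : ℝ, 0 < t → semicirclePt θ + t • u₁ ≠ (0, 1) ∧ semicirclePt θ + t • u₁ ≠ (0, -1)) ∧
    (∀ t : ℝ, 0 < t → semicirclePt θ + t • u₂ ≠ (0, 1) ∧ semicirclePt θ + t • u₂ ≠ (0, -1)) := by
  have hA : (semicirclePt θ).1 ^ 2 + (semicirclePt θ).2 ^ 2 = 1 := cos_sq_add_sin_sq θ
  have hA₁ : 0 < (semicirclePt θ).1 := cos_pos_of_mem_Ioo ⟨hθ₁, hθ₂⟩
  have h₂ : reflectAcross (semicirclePt θ) u₁ = u₂ := hrefl.symm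
  have h₁ : reflectAcross (semicirclePt θ) u₂ = u₁ := by
    rw [← h₂, reflectAcross_reflectAcross hA]
  have miss₁ : ∀ t : ℝ, 0 < t → ∀ ε : ℝ, ε ^ 2 = 1 → semicirclePt θ + t • u₁ ≠ (0, ε) :=
    fun _ ht _ hε =>
      ray_ne_endpoint_of_reflectAcross hA hA₁ hslope₁ (h₂ ▸ hin₂) (h₂ ▸ hslope₂) ht hε
  have miss₂ : ∀ t : ℝ, 0 < t → ∀ ε : ℝ, ε ^ 2 = 1 → semicirclePt θ + t • u₂ ≠ (0, ε) :=
    fun _ ht _ hε =>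
      ray_ne_endpoint_of_reflectAcross hA hA₁ hslope₂ (h₁ ▸ hin₁) (h₁ ▸ hslope₁) ht hε
  have hε : (-1 : ℝ) ^ 2 = 1 := by norm_num
  exact ⟨fun t ht => ⟨miss₁ t ht 1 (one_pow 2), miss₁ t ht (-1) hε⟩,
    fun t ht => ⟨miss₂ t ht 1 (one_pow 2), miss₂ t ht (-1) hε⟩⟩

theorem reflection_misses_endpoints (θ : ℝ)
    (hθ₁ : -(π / 2) < θ) (hθ₂ : θ < π / 2)
    (u₁ u₂ : ℝ × ℝ)
    -- L₂ is the billiard reflection of L₁: u₂ is the mirror image of u₁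
    -- across the radius (normal) direction at A = (cos θ, sin θ)
    (hrefl : u₂ = (2 * (u₁.1 * Real.cos θ + u₁.2 * Real.sin θ)) •
        semicirclePt θ - u₁)
    (hu₁ : u₁ ≠ 0)
    -- both rays point into the region to the left of the semicircle
    (hin₁ : u₁.1 < 0) (hin₂ : u₂.1 < 0)
    -- each ray makes an angle less than π/4 with the horizontal
    (hslope₁ : |u₁.2| < |u₁.1|) (hslope₂ : |u₂.2| < |u₂.1|)
    -- each ray intersects the semicircle only at A
    (honly₁ : ∀ t : ℝ, 0 < t → ∀ φ : ℝ, -(π / 2) < φ → φ < π / 2 →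
        semicirclePt θ + t • u₁ ≠ semicirclePt φ)
    (honly₂ : ∀ t : ℝ, 0 < t → ∀ φ : ℝ, -(π / 2) < φ → φ < π / 2 →
        semicirclePt θ + t • u₂ ≠ semicirclePt φ) :
    (∀ t : ℝ, 0 < t → semicirclePt θ + t • u₁ ≠ (0, 1) ∧ semicirclePt θ + t • u₁ ≠ (0, -1)) ∧
    (∀ t : ℝ, 0 < t → semicirclePt θ + t • u₂ ≠ (0, 1) ∧ semicirclePt θ + t • u₂ ≠ (0, -1)) :=
  reflection_misses_endpoints_general θ hθ₁ hθ₂ u₁ u₂ hrefl hin₁ hin₂ hslope₁ hslope₂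
end

section
/- For N ≥ 2, the matrix M_N (transition matrix of Σ̃_N on states {-N,…,N}) is primitive: some power of M_N has all entries strictly positive. -/
open Classical

/-- The allowed transitions of the subshift Σ̃_N on states -N,…,N. -/
def SigmaTrans (N : ℕ) (i j : ℤ) : Prop :=
  (i = 0 ∧ |j| ≤ (N : ℤ)) ∨
  (1 ≤ i ∧ i ≤ (N : ℤ) - 1 ∧ (j = i + 1 ∨ j = 0)) ∨
  (i = (N : ℤ) ∧ j = 0) ∨
  (-((N : ℤ) - 1) ≤ i ∧ i ≤ -1 ∧ (j = i - 1 ∨ j = 0)) ∨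
  (i = -(N : ℤ) ∧ j = 0)

/-- The transition matrix M_N, with index `i : Fin (2N+1)` encoding state `i - N`. -/
noncomputable def transMatrixNat (N : ℕ) : Matrix (Fin (2 * N + 1)) (Fin (2 * N + 1)) ℕ :=
  fun i j => if SigmaTrans N ((i : ℤ) - N) ((j : ℤ) - N) then 1 else 0

theorem transMatrix_primitive (N : ℕ) (hN : 2 ≤ N) :
    ∃ k : ℕ, ∀ i j : Fin (2 * N + 1), 0 < (transMatrixNat N ^ k) i j := by
  refine ⟨2, fun i j => ?_⟩
  have hz : (N : ℕ) < 2 * N + 1 := by omega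
  set z : Fin (2 * N + 1) := ⟨N, hz⟩ with hzdef
  have hzN : ((z : ℕ) : ℤ) - N = 0 := by simp [hzdef]
  have hi : (i : ℕ) ≤ 2 * N := by omega
  have hj : (j : ℕ) ≤ 2 * N := by omega
  have h1 : transMatrixNat N i z = 1 := by
    unfold transMatrixNat
    rw [hzN, if_pos]
    unfold SigmaTrans
    rw [abs_le]
    omega
  have h2 : transMatrixNat N z j = 1 := by
    unfold transMatrixNat
    rw [hzN, if_pos]
    unfold SigmaTrans
    rw [abs_le]
    omega
  have hsq : (transMatrixNat N ^ 2) i j =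
      ∑ l, transMatrixNat N i l * transMatrixNat N l j := by
    rw [sq, Matrix.mul_apply]
  rw [hsq]
  have : 0 < transMatrixNat N i z * transMatrixNat N z j := by
    rw [h1, h2]; norm_num
  exact lt_of_lt_of_le this (Finset.single_le_sum
    (f := fun l => transMatrixNat N i l * transMatrixNat N l j)
    (fun l _ => Nat.zero_le _) (Finset.mem_univ z))
end
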